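/- arXiv:math/9511206 — 2 statements merged into one kernel-verified Lean document; each statement's English description precedes it below -/
import Mathlib

section
/- Let Y be a Banach space and y₁*, ..., y_q* ∈ Y*. For any finitely supported tensor u = ∑_{i=p}^{q} αᵢ yᵢ* ⊗ eᵢ in Y* ⊗ c₀ (where (eᵢ) is the unit vector basis of c₀), the projective tensor norm of u in Y* ⊗̂_π c₀ equals the integral norm of u viewed as an operator from Y to ℓ^∞, i.e., ‖u‖_{Y*⊗̂_π c₀} = ‖u‖_{I(Y, ℓ^∞)}. -/
open Filter Topology ZeroAtInfty

/-- The Banach space `c₀` of real null sequences. -/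
abbrev czero : Type := ZeroAtInftyContinuousMap ℕ ℝ

/-- The Banach space `ℓ¹` of absolutely summable real sequences. -/
noncomputable abbrev ell1 : Type := lp (fun _ : ℕ => ℝ) 1

/-- The unit vector basis `(eᵢ)` of `c₀`. -/
noncomputable def czeroBasis (i : ℕ) : czero where
  toFun := fun j => if j = i then (1 : ℝ) else 0
  continuous_toFun := continuous_of_discreteTopology
  zero_at_infty' := by
    rw [cocompact_eq_atTop]
    refine tendsto_const_nhds.congr' ?_
    filter_upwards [Filter.eventually_ge_atTop (i + 1)] with j hj
    have : j ≠ i := by omega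
    simp [this]

/-!
Both suprema are the norm of the functional `φ v = ∑ᵢ αᵢ yᵢ* (vᵢ)` on `Y^I`, `I = [p, q]`,
normed by `‖v‖ = maxₑ ‖∑ᵢ εᵢ vᵢ‖` over sign patterns `ε`. On the compact side, only the
vectors `vᵢ = S eᵢ` matter, and the finite-rank maps `x ↦ ∑ᵢ xᵢ vᵢ` realise every `v` with
exactly this norm. Each such `S` yields `T = S*` truncated to `I`, which gives `≤` in one
direction. Conversely, Hahn–Banach extends `φ` from the image of `v ↦ (∑ᵢ εᵢ vᵢ)_ε` to the
`ℓ^∞`-sum of copies of `Y`, whose dual is the `ℓ¹`-sum of copies of `Y*`. This writes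
`αᵢ yᵢ* = ∑_ε εᵢ w_ε` with `∑_ε ‖w_ε‖ ≤ ‖φ‖`, so for `‖T‖ ≤ 1`,
`∑ᵢ αᵢ (T yᵢ*)ᵢ = ∑_ε ∑ᵢ εᵢ (T w_ε)ᵢ ≤ ∑_ε ‖T w_ε‖₁ ≤ ‖φ‖`.
-/

lemma SignType.abs_coe_le_one (s : SignType) : |(s : ℝ)| ≤ 1 := by
  cases s <;> simp

section SignCombination

variable {ι Y : Type*} [Fintype ι] [NormedAddCommGroup Y] [NormedSpace ℝ Y]

/-- The sup norm of `signCombination v` is the norm of the operator `ℓ^∞(ι) → Y`,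
`t ↦ ∑ i, t i • v i` (see `norm_sum_smul_le`), i.e. of `∑ eᵢ ⊗ vᵢ` in `ℓ^∞(ι) ⊗̌ Y`. -/
noncomputable def signCombination : (ι → Y) →L[ℝ] ((ι → SignType) → Y) :=
  ContinuousLinearMap.pi fun ε => ∑ i, (ε i : ℝ) • ContinuousLinearMap.proj i

lemma signCombination_apply (v : ι → Y) (ε : ι → SignType) :
    signCombination v ε = ∑ i, (ε i : ℝ) • v i := by
  simp [signCombination]

lemma signCombination_apply_single [DecidableEq ι] (v : ι → Y) (i : ι) :
    signCombination v (Pi.single i 1) = v i := by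
  rw [signCombination_apply, Finset.sum_eq_single i (fun j _ hj => by simp [hj]) (by simp)]
  simp

lemma norm_le_norm_signCombination [DecidableEq ι] (v : ι → Y) (i : ι) :
    ‖v i‖ ≤ ‖signCombination v‖ := by
  simpa [signCombination_apply_single] using norm_le_pi_norm (signCombination v) (Pi.single i 1)

lemma sum_apply_le_sum_norm [DecidableEq ι] (f : ι → StrongDual ℝ Y) {v : ι → Y}
    (hv : ‖signCombination v‖ ≤ 1) : ∑ i, f i (v i) ≤ ∑ i, ‖f i‖ :=
  Finset.sum_le_sum fun i _ => (le_abs_self _).trans <| (f i).unit_le_opNorm _ <|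
    (norm_le_norm_signCombination v i).trans hv

/-- The maximum of the convex function `t ↦ ‖∑ t i • v i‖` on the cube `‖t‖ ≤ 1` is attained at
a vertex, i.e. at a sign pattern. -/
lemma norm_sum_smul_le [DecidableEq ι] (v : ι → Y) (t : ι → ℝ) :
    ‖∑ i, t i • v i‖ ≤ ‖signCombination v‖ * ‖t‖ := by
  suffices h : ∀ t : ι → ℝ, ‖t‖ ≤ 1 → ‖∑ i, t i • v i‖ ≤ ‖signCombination v‖ by
    let L : (ι → ℝ) →L[ℝ] Y := LinearMap.toContinuousLinearMap (Fintype.linearCombination ℝ v)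
    have hL : ‖L‖ ≤ ‖signCombination v‖ :=
      L.opNorm_le_of_unit_norm (norm_nonneg _) fun t ht => by
        simpa [L, Fintype.linearCombination_apply] using h t ht.le
    simpa [L, Fintype.linearCombination_apply] using L.le_of_opNorm_le hL t
  intro t ht
  have hcube : t ∈ convexHull ℝ (Set.range fun (ε : ι → SignType) i => (ε i : ℝ)) := by
    refine convexHull_mono ?_ (?_ : t ∈ convexHull ℝ (Set.univ.pi fun _ => {-1, 1}))
    · rintro s hs
      refine ⟨fun i => SignType.sign (s i), funext fun i => ?_⟩
      obtain h | h : s i = -1 ∨ s i = 1 := hs i (Set.mem_univ i)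
      all_goals simp [h]
    · rw [convexHull_pi]
      intro i _
      rw [convexHull_pair, segment_eq_Icc (by norm_num)]
      exact abs_le.mp ((norm_le_pi_norm t i).trans ht)
  have hconv : ConvexOn ℝ Set.univ fun t : ι → ℝ => ‖∑ i, t i • v i‖ := by
    simpa [Function.comp_def, Fintype.linearCombination_apply] using
      convexOn_univ_norm.comp_linearMap (Fintype.linearCombination ℝ v)
  obtain ⟨-, ⟨ε, rfl⟩, hε⟩ := hconv.exists_ge_of_mem_convexHull (Set.subset_univ _) hcube
  calc ‖∑ i, t i • v i‖ ≤ ‖∑ i, (ε i : ℝ) • v i‖ := hε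
    _ = ‖signCombination v ε‖ := by rw [signCombination_apply]
    _ ≤ ‖signCombination v‖ := norm_le_pi_norm _ ε

end SignCombination

lemma ContinuousLinearMap.exists_norm_le_one_lt_apply {E : Type*} [NormedAddCommGroup E]
    [NormedSpace ℝ E] (w : StrongDual ℝ E) {r : ℝ} (hr : r < ‖w‖) :
    ∃ x : E, ‖x‖ ≤ 1 ∧ r < w x := by
  obtain ⟨x, hx, hrx⟩ := w.exists_lt_apply_of_lt_opNorm hr
  rcases le_or_gt 0 (w x) with hpos | hneg
  · exact ⟨x, hx.le, by rwa [Real.norm_of_nonneg hpos] at hrx⟩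
  · refine ⟨-x, by rw [norm_neg]; exact hx.le, ?_⟩
    rwa [Real.norm_eq_abs, abs_of_neg hneg, ← map_neg] at hrx

lemma ContinuousLinearMap.sum_norm_comp_single_le {κ : Type*} [Fintype κ] [DecidableEq κ]
    {E : κ → Type*} [∀ k, NormedAddCommGroup (E k)] [∀ k, NormedSpace ℝ (E k)]
    (G : StrongDual ℝ (∀ k, E k)) :
    ∑ k, ‖G.comp (ContinuousLinearMap.single ℝ E k)‖ ≤ ‖G‖ := by
  refine le_of_forall_pos_le_add fun δ hδ => ?_
  set η := δ / (Fintype.card κ + 1)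
  have hη : Fintype.card κ * η ≤ δ := by
    rw [mul_div_assoc', div_le_iff₀ (by positivity)]
    nlinarith
  choose u hu hGu using fun k =>
    (G.comp (ContinuousLinearMap.single ℝ E k)).exists_norm_le_one_lt_apply
      (sub_lt_self _ (by positivity : 0 < η))
  have hGsum : G u = ∑ k, G (Pi.single k (u k)) := by
    rw [← map_sum, Finset.univ_sum_single]
  calc ∑ k, ‖G.comp (ContinuousLinearMap.single ℝ E k)‖
      ≤ ∑ k, (G (Pi.single k (u k)) + η) :=
        Finset.sum_le_sum fun k _ => by simpa using (hGu k).le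
    _ = G u + Fintype.card κ * η := by
        rw [Finset.sum_add_distrib, ← hGsum, Finset.sum_const, Finset.card_univ, nsmul_eq_mul]
    _ ≤ ‖G‖ + δ := by
        have := G.unit_le_opNorm u ((pi_norm_le_iff_of_nonneg zero_le_one).2 hu)
        linarith [le_abs_self (G u), Real.norm_eq_abs (G u)]

/-- Hahn–Banach on the range of `signCombination`, followed by the `ℓ¹`-decomposition of the
extended functional on the `ℓ^∞`-sum. -/
lemma exists_sum_norm_le_and_eq_sum_smul {ι Y : Type*} [Fintype ι] [DecidableEq ι]
    [NormedAddCommGroup Y] [NormedSpace ℝ Y] (f : ι → StrongDual ℝ Y) {M : ℝ}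
    (hM : ∀ v : ι → Y, ‖signCombination v‖ ≤ 1 → ∑ i, f i (v i) ≤ M) :
    ∃ w : (ι → SignType) → StrongDual ℝ Y,
      ∑ ε, ‖w ε‖ ≤ M ∧ ∀ i, f i = ∑ ε, (ε i : ℝ) • w ε := by
  let φ : StrongDual ℝ (ι → Y) := ∑ i, (f i).comp (ContinuousLinearMap.proj i)
  let P : ((ι → SignType) → Y) →L[ℝ] (ι → Y) :=
    ContinuousLinearMap.pi fun i => ContinuousLinearMap.proj (Pi.single i 1)
  have hφP : ∀ v, φ (P (signCombination v)) = ∑ i, f i (v i) := fun v => by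
    simp [φ, P, signCombination_apply_single]
  let R := LinearMap.range (signCombination : (ι → Y) →L[ℝ] ((ι → SignType) → Y)).toLinearMap
  let g : StrongDual ℝ R := (φ.comp P).comp R.subtypeL
  have hg : ‖g‖ ≤ M := by
    have hM0 : 0 ≤ M := by simpa using hM 0 (by simp)
    refine g.opNorm_le_of_unit_norm hM0 ?_
    rintro ⟨_, v, rfl⟩ hv
    replace hv : ‖signCombination v‖ = 1 := hv
    have hneg := hM (-v) (by rw [map_neg, norm_neg, hv])
    simp only [Pi.neg_apply, map_neg, Finset.sum_neg_distrib] at hneg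
    have hgv : g ⟨_, v, rfl⟩ = ∑ i, f i (v i) := hφP v
    rw [hgv, Real.norm_eq_abs, abs_le]
    exact ⟨by linarith, hM v hv.le⟩
  obtain ⟨G, hGg, hGnorm⟩ := exists_extension_norm_eq R g
  refine ⟨fun ε => G.comp (ContinuousLinearMap.single ℝ (fun _ => Y) ε),
    G.sum_norm_comp_single_le.trans (hGnorm.trans_le hg), fun i => ?_⟩
  ext u
  have hGJ : G (signCombination (Pi.single i u)) = f i u := by
    refine (hGg ⟨_, LinearMap.mem_range_self _ (Pi.single i u)⟩).trans ?_
    change φ (P (signCombination (Pi.single i u))) = f i u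
    rw [hφP, Finset.sum_eq_single i (fun j _ hj => by simp [hj]) (by simp)]
    simp
  rw [← hGJ, ← Finset.univ_sum_single (signCombination (Pi.single i u)), map_sum]
  simp [signCombination_apply, Pi.single_apply, Pi.single_smul']

section CzeroEll1

lemma czero_norm_apply_le (x : czero) (n : ℕ) : ‖x n‖ ≤ ‖x‖ :=
  (x.toBCF.norm_coe_le_norm n).trans_eq ZeroAtInftyContinuousMap.norm_toBCF_eq_norm

lemma czero_norm_le_of_forall_le {x : czero} {C : ℝ} (hC : 0 ≤ C) (h : ∀ n, ‖x n‖ ≤ C) :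
    ‖x‖ ≤ C := by
  rw [← ZeroAtInftyContinuousMap.norm_toBCF_eq_norm]
  exact (BoundedContinuousFunction.norm_le hC).2 h

noncomputable def czeroEval (n : ℕ) : StrongDual ℝ czero :=
  LinearMap.mkContinuous
    { toFun := fun x => x n
      map_add' := fun _ _ => rfl
      map_smul' := fun _ _ => rfl } 1
    fun x => by simpa using czero_norm_apply_le x n

@[simp] lemma czeroEval_apply (n : ℕ) (x : czero) : czeroEval n x = x n := rfl

lemma czeroBasis_apply (i n : ℕ) : czeroBasis i n = if n = i then 1 else 0 := rfl

lemma norm_sum_smul_czeroBasis_le (s : Finset ℕ) {t : ℕ → ℝ} (ht : ∀ i ∈ s, |t i| ≤ 1) :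
    ‖∑ i ∈ s, t i • czeroBasis i‖ ≤ 1 := by
  refine czero_norm_le_of_forall_le zero_le_one fun n => ?_
  rw [← czeroEval_apply, map_sum]
  simp only [map_smul, czeroEval_apply, czeroBasis_apply, smul_eq_mul, mul_ite, mul_one, mul_zero,
    Finset.sum_ite_eq]
  split_ifs with hn
  exacts [ht n hn, by simp]

lemma ell1_sum_norm_comp_le {ι : Type*} [Fintype ι] (g : ell1) (c : ι ↪ ℕ) :
    ∑ i, ‖(g : ℕ → ℝ) (c i)‖ ≤ ‖g‖ := by
  simpa [Finset.sum_map] using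
    lp.sum_rpow_le_norm_rpow (p := 1) (by norm_num) g (Finset.univ.map c)

variable {Y : Type*} [NormedAddCommGroup Y] [NormedSpace ℝ Y]

/-- The restriction to the coordinates in `s` of the adjoint `S* : Y* → c₀* = ℓ¹`. -/
lemma exists_ell1_apply_eq_apply_czeroBasis (S : czero →L[ℝ] Y) (s : Finset ℕ) :
    ∃ T : StrongDual ℝ Y →L[ℝ] ell1, ‖T‖ ≤ ‖S‖ ∧
      ∀ z : StrongDual ℝ Y, ∀ i ∈ s, (T z : ℕ → ℝ) i = z (S (czeroBasis i)) := by
  let T : StrongDual ℝ Y →L[ℝ] ell1 := ∑ i ∈ s,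
    (ContinuousLinearMap.apply ℝ ℝ (S (czeroBasis i))).smulRight (lp.single 1 i 1 : ell1)
  have hT : ∀ z, T z = ∑ i ∈ s, z (S (czeroBasis i)) • (lp.single 1 i 1 : ell1) := fun z => by
    simp [T]
  refine ⟨T, T.opNorm_le_bound (norm_nonneg S) fun z => ?_, fun z i hi => ?_⟩
  · let x : czero := ∑ i ∈ s, (SignType.sign (z (S (czeroBasis i))) : ℝ) • czeroBasis i
    have hx : ‖x‖ ≤ 1 := norm_sum_smul_czeroBasis_le s fun i _ => SignType.abs_coe_le_one _
    calc ‖T z‖ ≤ ∑ i ∈ s, |z (S (czeroBasis i))| := by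
          rw [hT]
          refine (norm_sum_le _ _).trans_eq (Finset.sum_congr rfl fun i _ => ?_)
          rw [norm_smul, lp.norm_single (by norm_num)]
          simp
      _ = z (S x) := by simp [x, sign_mul_self]
      _ ≤ ‖z‖ * (‖S‖ * ‖x‖) :=
          (le_abs_self _).trans ((z.le_opNorm _).trans (by gcongr; exact S.le_opNorm x))
      _ ≤ ‖z‖ * (‖S‖ * 1) := by gcongr
      _ = ‖S‖ * ‖z‖ := by ring
  · rw [hT, lp.coeFn_sum, Finset.sum_apply,
      Finset.sum_eq_single i (fun j _ hj => ?_) (by simp [hi])]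
    · simp
    · simp [hj.symm]

variable {ι : Type*} [Fintype ι] [DecidableEq ι]

lemma exists_isCompactOperator_apply_czeroBasis (c : ι ↪ ℕ) (v : ι → Y) :
    ∃ S : czero →L[ℝ] Y, ‖S‖ ≤ ‖signCombination v‖ ∧ IsCompactOperator S ∧
      ∀ i, S (czeroBasis (c i)) = v i := by
  let L : (ι → ℝ) →L[ℝ] Y := LinearMap.toContinuousLinearMap (Fintype.linearCombination ℝ v)
  let R : czero →L[ℝ] (ι → ℝ) := ContinuousLinearMap.pi fun i => czeroEval (c i)
  have hR : ‖R‖ ≤ 1 := R.opNorm_le_bound zero_le_one fun x => by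
    simpa [R] using
      (pi_norm_le_iff_of_nonneg (norm_nonneg x)).2 fun i => czero_norm_apply_le x (c i)
  have hL : ‖L‖ ≤ ‖signCombination v‖ := L.opNorm_le_bound (norm_nonneg _) fun t => by
    simpa [L, Fintype.linearCombination_apply] using norm_sum_smul_le v t
  refine ⟨L.comp R, ?_, ?_, fun i => ?_⟩
  · calc ‖L.comp R‖ ≤ ‖L‖ * ‖R‖ := L.opNorm_comp_le R
      _ ≤ ‖signCombination v‖ * 1 := by gcongr
      _ = ‖signCombination v‖ := mul_one _
  · have hid : IsCompactOperator (id : (ι → ℝ) → ι → ℝ) :=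
      (isCompactOperator_id_iff_finiteDimensional (𝕜 := ℝ)).2 inferInstance
    exact (hid.clm_comp L).comp_clm R
  · simp [L, R, Fintype.linearCombination_apply, czeroBasis_apply, c.injective.eq_iff]

lemma sum_ell1_apply_le (T : StrongDual ℝ Y →L[ℝ] ell1) (hT : ‖T‖ ≤ 1) (c : ι ↪ ℕ)
    (f : ι → StrongDual ℝ Y) {M : ℝ}
    (hM : ∀ v : ι → Y, ‖signCombination v‖ ≤ 1 → ∑ i, f i (v i) ≤ M) :
    ∑ i, (T (f i) : ℕ → ℝ) (c i) ≤ M := by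
  obtain ⟨w, hw, hf⟩ := exists_sum_norm_le_and_eq_sum_smul f hM
  calc ∑ i, (T (f i) : ℕ → ℝ) (c i) = ∑ ε, ∑ i, (ε i : ℝ) * (T (w ε) : ℕ → ℝ) (c i) := by
        simp only [hf, map_sum, map_smul, lp.coeFn_sum, lp.coeFn_smul, Finset.sum_apply,
          Pi.smul_apply, smul_eq_mul]
        exact Finset.sum_comm
    _ ≤ ∑ ε, ‖T (w ε)‖ := Finset.sum_le_sum fun ε _ => by
        refine (Finset.sum_le_sum fun i _ => ?_).trans (ell1_sum_norm_comp_le _ c)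
        calc (ε i : ℝ) * (T (w ε) : ℕ → ℝ) (c i)
            ≤ |(ε i : ℝ)| * ‖(T (w ε) : ℕ → ℝ) (c i)‖ := by
              rw [Real.norm_eq_abs, ← abs_mul]; exact le_abs_self _
          _ ≤ ‖(T (w ε) : ℕ → ℝ) (c i)‖ :=
              mul_le_of_le_one_left (norm_nonneg _) (SignType.abs_coe_le_one _)
    _ ≤ ∑ ε, ‖w ε‖ := Finset.sum_le_sum fun ε _ => (T.le_of_opNorm_le hT _).trans_eq (one_mul _)
    _ ≤ M := hw

end CzeroEll1

theorem sSup_pairing_ell1_eq_sSup_pairing_isCompactOperator {Y : Type*} [NormedAddCommGroup Y]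
    [NormedSpace ℝ Y] (s : Finset ℕ) (f : ℕ → StrongDual ℝ Y) :
    sSup {r : ℝ | ∃ T : StrongDual ℝ Y →L[ℝ] ell1, ‖T‖ ≤ 1 ∧
        r = ∑ i ∈ s, (T (f i) : ℕ → ℝ) i} =
    sSup {r : ℝ | ∃ S : czero →L[ℝ] Y, ‖S‖ ≤ 1 ∧ IsCompactOperator S ∧
        r = ∑ i ∈ s, f i (S (czeroBasis i))} := by
  classical
  set A := {r : ℝ | ∃ T : StrongDual ℝ Y →L[ℝ] ell1, ‖T‖ ≤ 1 ∧
    r = ∑ i ∈ s, (T (f i) : ℕ → ℝ) i}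
  set B := {r : ℝ | ∃ S : czero →L[ℝ] Y, ‖S‖ ≤ 1 ∧ IsCompactOperator S ∧
    r = ∑ i ∈ s, f i (S (czeroBasis i))}
  let c : s ↪ ℕ := Function.Embedding.subtype _
  have hA_le : ∀ M, (∀ v : s → Y, ‖signCombination v‖ ≤ 1 → ∑ i : s, f i (v i) ≤ M) →
      ∀ a ∈ A, a ≤ M := by
    rintro M hM _ ⟨T, hT, rfl⟩
    rw [← Finset.sum_coe_sort s]
    exact sum_ell1_apply_le T hT c (fun i => f i) hM
  have hB_mem : ∀ v : s → Y, ‖signCombination v‖ ≤ 1 → ∑ i : s, f i (v i) ∈ B := by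
    intro v hv
    obtain ⟨S, hS, hSc, hSv⟩ := exists_isCompactOperator_apply_czeroBasis c v
    refine ⟨S, hS.trans hv, hSc, ?_⟩
    rw [← Finset.sum_coe_sort s]
    exact Finset.sum_congr rfl fun i _ => by rw [← hSv i]; rfl
  have hBA : B ⊆ A := by
    rintro _ ⟨S, hS, -, rfl⟩
    obtain ⟨T, hT, hTS⟩ := exists_ell1_apply_eq_apply_czeroBasis S s
    exact ⟨T, hT.trans hS, Finset.sum_congr rfl fun i hi => (hTS _ i hi).symm⟩
  have hA_bdd : BddAbove A :=
    ⟨_, hA_le _ fun v hv => sum_apply_le_sum_norm (fun i : s => f i) hv⟩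
  have hB_ne : B.Nonempty := ⟨_, hB_mem 0 (by simp)⟩
  exact le_antisymm
    (csSup_le (hB_ne.mono hBA) (hA_le _ fun v hv => le_csSup (hA_bdd.mono hBA) (hB_mem v hv)))
    (csSup_le_csSup hA_bdd hB_ne hBA)

/-- The two sides are `‖u‖_π` and `‖u‖_I`, computed as suprema of pairings against the unit
balls of `(Y* ⊗̂_π c₀)* = L(Y*, ℓ¹)` and of the predual `K_{w*}(Y*, ℓ¹)` of `I(Y, ℓ^∞)`, whose
elements are the adjoints of compact operators `S : c₀ → Y`. -/
theorem projective_norm_eq_integral_norm_general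
    {Y : Type*} [NormedAddCommGroup Y] [NormedSpace ℝ Y]
    (p q : ℕ) (α : ℕ → ℝ) (y : ℕ → StrongDual ℝ Y) :
    sSup {r : ℝ | ∃ T : StrongDual ℝ Y →L[ℝ] ell1, ‖T‖ ≤ 1 ∧
        r = ∑ i ∈ Finset.Icc p q, α i * (T (y i) : ∀ _ : ℕ, ℝ) i} =
    sSup {r : ℝ | ∃ S : czero →L[ℝ] Y, ‖S‖ ≤ 1 ∧ IsCompactOperator S ∧
        r = ∑ i ∈ Finset.Icc p q, α i * y i (S (czeroBasis i))} := by
  simpa using sSup_pairing_ell1_eq_sSup_pairing_isCompactOperator (Finset.Icc p q) (α • y)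

/-- For a finitely supported tensor `u = ∑_{i=p}^{q} αᵢ yᵢ* ⊗ eᵢ ∈ Y* ⊗ c₀`, the projective
tensor norm of `u` in `Y* ⊗̂_π c₀` (computed, via the isometric embedding into the bidual, as
the supremum of pairings against the unit ball of `(Y* ⊗̂_π c₀)* = L(Y*, ℓ¹)`) equals the
integral norm of `u` viewed as an operator in `I(Y, ℓ^∞)` (computed as the supremum of
pairings against the unit ball of the predual `Y ⊗̂_ε ℓ¹ ≅ K_{w*}(Y*, ℓ¹)`, whose elements are
the adjoints `S*` of compact operators `S : c₀ → Y`; the pairing of `u` with `S*` is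
`∑ αᵢ ⟨yᵢ*, S eᵢ⟩`). -/
theorem projective_norm_eq_integral_norm
    {Y : Type*} [NormedAddCommGroup Y] [NormedSpace ℝ Y] [CompleteSpace Y]
    (p q : ℕ) (α : ℕ → ℝ) (y : ℕ → StrongDual ℝ Y) :
    sSup {r : ℝ | ∃ T : StrongDual ℝ Y →L[ℝ] ell1, ‖T‖ ≤ 1 ∧
        r = ∑ i ∈ Finset.Icc p q, α i * (T (y i) : ∀ _ : ℕ, ℝ) i} =
    sSup {r : ℝ | ∃ S : czero →L[ℝ] Y, ‖S‖ ≤ 1 ∧ IsCompactOperator S ∧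
        r = ∑ i ∈ Finset.Icc p q, α i * y i (S (czeroBasis i))} :=
  projective_norm_eq_integral_norm_general p q α y
end

section
/- Let E be a Banach space, T : M(Ω, E) → ℓ¹ a bounded linear operator, (mₙ) a sequence of E-valued measures with |mₙ| ≤ λ for a probability measure λ, and suppose there exists a map ω ↦ T(ω) into the unit ball of L(E**, ℓ¹) such that each T(ω) is a compact operator and the ℓ¹-valued functions ω ↦ T(ω)(ρ(mₙ)(ω)) are Bochner integrable with T(mₙ) = ∫_Ω T(ω)(ρ(mₙ)(ω)) dλ(ω), where ρ(mₙ)(ω) ∈ E** with sup_{n,ω} ‖ρ(mₙ)(ω)‖ < ∞. Then {T(mₙ) : n ≥ 1} is relatively weakly compact in ℓ¹, hence relatively norm compact, and so (mₙ) has no subsequence generating a complemented copy of ℓ¹ under T. -/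
open MeasureTheory Filter Topology

namespace NormedSpace

/-- The topological dual of a seminormed space `E` (as in the older Mathlib: a type synonym
of `E →L[𝕜] 𝕜` carrying the operator-norm structure). -/
def Dual (𝕜 : Type*) [NontriviallyNormedField 𝕜] (E : Type*) [SeminormedAddCommGroup E]
    [NormedSpace 𝕜 E] : Type _ := E →L[𝕜] 𝕜

noncomputable instance (𝕜 : Type*) [NontriviallyNormedField 𝕜] (E : Type*) [SeminormedAddCommGroup E]
    [NormedSpace 𝕜 E] : SeminormedAddCommGroup (Dual 𝕜 E) :=
  ContinuousLinearMap.toSeminormedAddCommGroup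

noncomputable instance (𝕜 : Type*) [NontriviallyNormedField 𝕜] (E : Type*) [SeminormedAddCommGroup E]
    [NormedSpace 𝕜 E] : NormedSpace 𝕜 (Dual 𝕜 E) :=
  ContinuousLinearMap.toNormedSpace

instance (𝕜 : Type*) [NontriviallyNormedField 𝕜] (E : Type*) [SeminormedAddCommGroup E]
    [NormedSpace 𝕜 E] : FunLike (Dual 𝕜 E) E 𝕜 :=
  inferInstanceAs (FunLike (E →L[𝕜] 𝕜) E 𝕜)

instance (𝕜 : Type*) [NontriviallyNormedField 𝕜] (E : Type*) [SeminormedAddCommGroup E]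
    [NormedSpace 𝕜 E] : LinearMapClass (Dual 𝕜 E) 𝕜 E 𝕜 :=
  inferInstanceAs (LinearMapClass (E →L[𝕜] 𝕜) 𝕜 E 𝕜)

noncomputable instance (𝕜 : Type*) [NontriviallyNormedField 𝕜] (E : Type*) [NormedAddCommGroup E]
    [NormedSpace 𝕜 E] : NormedAddCommGroup (Dual 𝕜 E) :=
  ContinuousLinearMap.toNormedAddCommGroup

end NormedSpace

/-- Partition sums for the variation `|m|(A)` of a vector measure. -/
def variationSet {Ω : Type*} [MeasurableSpace Ω] {X : Type*} [NormedAddCommGroup X]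
    (m : VectorMeasure Ω X) (A : Set Ω) : Set ℝ :=
  {r | ∃ (k : ℕ) (B : Fin k → Set Ω), (∀ i, MeasurableSet (B i)) ∧ (∀ i, B i ⊆ A) ∧
    (Pairwise (Function.onFun Disjoint B)) ∧ r = ∑ i, ‖m (B i)‖}

/-!
Truncation to the first `N` coordinates converges to the identity of `ℓ¹` pointwise, and being of
norm at most one the truncations are equicontinuous, so the convergence is uniform on compact
sets. For fixed `ω` the vectors `T(ω)(ρ(mₙ)(ω))` all lie in the compact set `T(ω)(C • ball)`, so
their tails are uniformly small in `n`; dominated convergence transfers this to the integrals `yₙ`.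
A bounded subset of `ℓ¹` with uniformly small tails is totally bounded, and a norm compact set is
weakly compact because the weak topology is coarser and Hausdorff.
-/

open Set Bornology

section CompactApproximation

variable {𝕜 F : Type*} [NontriviallyNormedField 𝕜] [NormedAddCommGroup F] [NormedSpace 𝕜 F]
  {ι : Type*} {l : Filter ι} {P : ι → F →L[𝕜] F}

theorem tendstoUniformlyOn_of_forall_tendsto_of_norm_le {B : ℝ} (hPB : ∀ i, ‖P i‖ ≤ B)
    (hP : ∀ x, Tendsto (fun i => P i x) l (𝓝 x)) {K : Set F} (hK : IsCompact K) :
    TendstoUniformlyOn (fun i => ⇑(P i)) id l K := by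
  have : CompactSpace K := isCompact_iff_compactSpace.mp hK
  have hequi : Equicontinuous fun i => ⇑(P i) :=
    (NormedSpace.equicontinuous_TFAE P).out 1 5 |>.mpr (⟨B, hPB⟩ : ∃ C, ∀ i, ‖P i‖ ≤ C)
  have hequiK : Equicontinuous fun i (x : K) => P i x :=
    (equicontinuous_restrict_iff _).2 (hequi.equicontinuousOn K)
  rw [tendstoUniformlyOn_iff_tendstoUniformly_comp_coe]
  exact UniformFun.tendsto_iff_tendstoUniformly.1 <|
    (hequiK.tendsto_uniformFun_iff_pi _ _).2 (tendsto_pi_nhds.2 fun x => hP x)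

theorem totallyBounded_of_tendstoUniformlyOn_isCompactOperator [l.NeBot]
    (hP : ∀ i, IsCompactOperator (P i)) {S : Set F} (hS : IsBounded S)
    (hPS : TendstoUniformlyOn (fun i => ⇑(P i)) id l S) : TotallyBounded S := by
  refine Metric.totallyBounded_iff.2 fun ε hε => ?_
  obtain ⟨i, hi⟩ := (Metric.tendstoUniformlyOn_iff.1 hPS (ε / 2) (half_pos hε)).exists
  obtain ⟨K, hK, hPK⟩ := (hP i).image_subset_compact_of_bounded hS
  obtain ⟨t, ht, hKt⟩ := Metric.totallyBounded_iff.1 hK.totallyBounded (ε / 2) (half_pos hε)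
  refine ⟨t, ht, fun x hx => ?_⟩
  obtain ⟨c, hc, hxc⟩ := mem_iUnion₂.1 (hKt (hPK ⟨x, hx, rfl⟩))
  refine mem_iUnion₂.2 ⟨c, hc, ?_⟩
  calc dist x c ≤ dist x (P i x) + dist (P i x) c := dist_triangle _ _ _
    _ < ε / 2 + ε / 2 := add_lt_add (hi x hx) hxc
    _ = ε := add_halves ε

end CompactApproximation

theorem IsCompact.isCompact_weakSpace_closure {𝕜 F : Type*} [RCLike 𝕜] [NormedAddCommGroup F]
    [NormedSpace 𝕜 F] {S : Set F} (hS : IsCompact (closure S)) :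
    IsCompact (@closure (WeakSpace 𝕜 F) _ S) :=
  (hS.image (toWeakSpaceCLM 𝕜 F).continuous).closure_of_subset fun x hx =>
    ⟨x, subset_closure hx, rfl⟩

section Integral

variable {Ω F : Type*} [MeasurableSpace Ω] {μ : Measure Ω} [NormedAddCommGroup F] [NormedSpace ℝ F]
  [CompleteSpace F] {ι : Type*} {l : Filter ι} {P : ι → F →L[ℝ] F}

theorem tendstoUniformlyOn_range_integral [IsFiniteMeasure μ] [l.IsCountablyGenerated] {B C : ℝ}
    (hPB : ∀ i, ‖P i‖ ≤ B) {f : ℕ → Ω → F} (hf : ∀ n, Integrable (f n) μ)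
    (hfC : ∀ n ω, ‖f n ω‖ ≤ C)
    (hPf : ∀ ω, TendstoUniformlyOn (fun i => ⇑(P i)) id l (range fun n => f n ω)) :
    TendstoUniformlyOn (fun i => ⇑(P i)) id l (range fun n => ∫ ω, f n ω ∂μ) := by
  set g : ι → Ω → ℝ := fun i ω => ⨆ n, ‖f n ω - P i (f n ω)‖
  have hdefect_le : ∀ i n ω, ‖f n ω - P i (f n ω)‖ ≤ C + B * C := fun i n ω =>
    calc ‖f n ω - P i (f n ω)‖ ≤ ‖f n ω‖ + ‖P i‖ * ‖f n ω‖ :=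
          (norm_sub_le _ _).trans (add_le_add le_rfl ((P i).le_opNorm _))
      _ ≤ C + B * C := add_le_add (hfC n ω)
          (mul_le_mul (hPB i) (hfC n ω) (norm_nonneg _) ((norm_nonneg _).trans (hPB i)))
  have hbdd : ∀ i ω, BddAbove (range fun n => ‖f n ω - P i (f n ω)‖) := fun i ω =>
    ⟨C + B * C, forall_mem_range.2 (hdefect_le i · ω)⟩
  have hg_nonneg : ∀ i ω, 0 ≤ g i ω := fun i ω => (norm_nonneg _).trans (le_ciSup (hbdd i ω) 0)
  have hg_bound : ∀ i, ∀ᵐ ω ∂μ, ‖g i ω‖ ≤ C + B * C := fun i => ae_of_all _ fun ω => by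
    rw [Real.norm_of_nonneg (hg_nonneg i ω)]
    exact ciSup_le (hdefect_le i · ω)
  have hg_meas : ∀ i, AEStronglyMeasurable (g i) μ := fun i =>
    (AEMeasurable.iSup fun n => ((hf n).sub ((P i).integrable_comp (hf n))).norm.aemeasurable
      ).aestronglyMeasurable
  have hg_lim : ∀ ω, Tendsto (fun i => g i ω) l (𝓝 0) := fun ω => by
    refine Metric.tendsto_nhds.2 fun ε hε => ?_
    filter_upwards [Metric.tendstoUniformlyOn_iff.1 (hPf ω) (ε / 2) (half_pos hε)] with i hi
    rw [Real.dist_0_eq_abs, abs_of_nonneg (hg_nonneg i ω)]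
    refine (ciSup_le fun n => ?_).trans_lt (half_lt_self hε)
    rw [← dist_eq_norm]
    exact (hi _ ⟨n, rfl⟩).le
  have hint_lim : Tendsto (fun i => ∫ ω, g i ω ∂μ) l (𝓝 0) := by
    simpa using tendsto_integral_filter_of_dominated_convergence _ (Eventually.of_forall hg_meas)
      (Eventually.of_forall hg_bound) (integrable_const _) (ae_of_all _ hg_lim)
  refine Metric.tendstoUniformlyOn_iff.2 fun ε hε => ?_
  filter_upwards [hint_lim.eventually_lt_const hε] with i hi
  rintro - ⟨n, rfl⟩
  calc dist (∫ ω, f n ω ∂μ) (P i (∫ ω, f n ω ∂μ))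
      = ‖∫ ω, (f n ω - P i (f n ω)) ∂μ‖ := by
        rw [dist_eq_norm, integral_sub (hf n) ((P i).integrable_comp (hf n)),
          (P i).integral_comp_comm (hf n)]
    _ ≤ ∫ ω, g i ω ∂μ :=
        norm_integral_le_of_norm_le (integrable_const _ |>.mono' (hg_meas i) (hg_bound i))
          (ae_of_all _ fun ω => le_ciSup (hbdd i ω) n)
    _ < ε := hi

end Integral

namespace lp

variable (𝕜 : Type*) {E : ℕ → Type*} [NontriviallyNormedField 𝕜] [∀ i, NormedAddCommGroup (E i)]
  [∀ i, NormedSpace 𝕜 (E i)] (p : ENNReal) [Fact (1 ≤ p)]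

noncomputable def truncation (N : ℕ) : lp E p →L[𝕜] lp E p :=
  ∑ i ∈ Finset.range N, (singleContinuousLinearMap 𝕜 E p i).comp (evalCLM 𝕜 E p i)

variable {𝕜 p}

theorem truncation_apply (N : ℕ) (x : lp E p) :
    truncation 𝕜 p N x = ∑ i ∈ Finset.range N, lp.single p i (x i) := by
  simp [truncation, evalCLM]

theorem truncation_apply_apply (N : ℕ) (x : lp E p) (i : ℕ) :
    truncation 𝕜 p N x i = if i < N then x i else 0 := by
  simp only [truncation_apply, lp.coeFn_sum, lp.coeFn_single]
  rw [Finset.sum_apply, Finset.sum_pi_single]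
  simp

theorem norm_truncation_le (N : ℕ) : ‖truncation (E := E) 𝕜 p N‖ ≤ 1 := by
  refine ContinuousLinearMap.opNorm_le_bound _ zero_le_one fun x => ?_
  rw [one_mul]
  refine lp.norm_mono (zero_lt_one.trans_le Fact.out).ne' fun i => ?_
  rw [truncation_apply_apply]
  split_ifs <;> simp

theorem tendsto_truncation (hp : p ≠ ⊤) (x : lp E p) :
    Tendsto (fun N => truncation 𝕜 p N x) atTop (𝓝 x) := by
  simpa only [truncation_apply] using (lp.hasSum_single hp x).tendsto_sum_nat

theorem isCompactOperator_truncation [∀ i, ProperSpace (E i)] (N : ℕ) :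
    IsCompactOperator (truncation (E := E) 𝕜 p N) :=
  Submodule.sum_mem (compactOperator _ _ _) fun i _ =>
    (isCompactOperator_of_locallyCompactSpace_dom (evalCLM 𝕜 E p i)).clm_comp
      (singleContinuousLinearMap 𝕜 E p i)

end lp

theorem relatively_compact_image_of_compact_densities_general
    {Ω : Type*} [MeasurableSpace Ω] {E : Type*} [NormedAddCommGroup E] [NormedSpace ℝ E]
    (lam : Measure Ω) [IsProbabilityMeasure lam]
    (ρ : ℕ → Ω → NormedSpace.Dual ℝ (NormedSpace.Dual ℝ E))
    (hρbdd : ∃ C : ℝ, ∀ n ω, ‖ρ n ω‖ ≤ C)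
    (T : Ω → (NormedSpace.Dual ℝ (NormedSpace.Dual ℝ E) →L[ℝ] ell1))
    (hT1 : ∀ ω, ‖T ω‖ ≤ 1)
    (hTcpt : ∀ ω, IsCompactOperator (T ω))
    (hint : ∀ n, Integrable (fun ω => T ω (ρ n ω)) lam)
    (y : ℕ → ell1)
    (hy : ∀ n, y n = ∫ ω, T ω (ρ n ω) ∂lam) :
    IsCompact (@closure (WeakSpace ℝ ell1) _ (Set.range y)) ∧
    IsCompact (closure (Set.range y)) := by
  obtain ⟨C, hC⟩ := hρbdd
  obtain rfl : y = fun n => ∫ ω, T ω (ρ n ω) ∂lam := funext hy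
  let P : ℕ → ell1 →L[ℝ] ell1 := lp.truncation ℝ 1
  have hTρ : ∀ n ω, ‖T ω (ρ n ω)‖ ≤ C := fun n ω =>
    ((T ω).le_of_opNorm_le (hT1 ω) _).trans (by simpa using hC n ω)
  have hlocal : ∀ ω, TendstoUniformlyOn (fun N => ⇑(P N)) id atTop
      (range fun n => T ω (ρ n ω)) := fun ω => by
    refine (tendstoUniformlyOn_of_forall_tendsto_of_norm_le (P := P)
      lp.norm_truncation_le (lp.tendsto_truncation ENNReal.one_ne_top)
      ((hTcpt ω).isCompact_closure_image_closedBall C)).mono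
      (range_subset_iff.2 fun n => subset_closure ⟨ρ n ω, ?_, rfl⟩)
    simpa using hC n ω
  have hbdd : IsBounded (range fun n => ∫ ω, T ω (ρ n ω) ∂lam) :=
    isBounded_iff_forall_norm_le.2 ⟨C, forall_mem_range.2 fun n => by
      simpa using norm_integral_le_of_norm_le_const (μ := lam) (ae_of_all _ (hTρ n))⟩
  have hK : IsCompact (closure (range fun n => ∫ ω, T ω (ρ n ω) ∂lam)) :=
    (totallyBounded_of_tendstoUniformlyOn_isCompactOperator (P := P)
      lp.isCompactOperator_truncation hbdd
      (tendstoUniformlyOn_range_integral lp.norm_truncation_le hint hTρ hlocal)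
      ).closure.isCompact_of_isClosed isClosed_closure
  exact ⟨hK.isCompact_weakSpace_closure, hK⟩

/-- Let `T : M(Ω, E) → ℓ¹` be a bounded operator, `(mₙ)` a sequence of `E`-valued measures
with `|mₙ| ≤ λ` for a probability measure `λ`, and suppose that (as provided by the
representation of operators on `M(Ω, E)`) there is a map `ω ↦ T(ω)` into the unit ball of
`L(E**, ℓ¹)` consisting of compact operators, with `ω ↦ T(ω)(ρ(mₙ)(ω))` Bochner integrable
and `T(mₙ) = ∫_Ω T(ω)(ρ(mₙ)(ω)) dλ(ω)`, where `ρ(mₙ)` is a uniformly bounded weak*-density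
of `mₙ`.  Then `{T(mₙ) : n ≥ 1}` is relatively weakly compact in `ℓ¹`, hence (by the Schur
property) relatively norm compact; so `(mₙ)` has no subsequence on which `T` fixes a copy of
the `ℓ¹`-basis, i.e. `(mₙ)` generates no complemented copy of `ℓ¹` under `T`. -/
theorem relatively_compact_image_of_compact_densities
    {Ω : Type*} [MeasurableSpace Ω] {E : Type*} [NormedAddCommGroup E] [NormedSpace ℝ E]
    [CompleteSpace E]
    (lam : Measure Ω) [IsProbabilityMeasure lam]
    (m : ℕ → VectorMeasure Ω E)
    (hm : ∀ n, ∀ A : Set Ω, MeasurableSet A →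
      ∀ r ∈ variationSet (m n) A, r ≤ (lam A).toReal)
    (ρ : ℕ → Ω → NormedSpace.Dual ℝ (NormedSpace.Dual ℝ E))
    (hρ : ∀ n (x' : NormedSpace.Dual ℝ E) (A : Set Ω), MeasurableSet A →
      x' ((m n) A) = ∫ ω in A, ρ n ω x' ∂lam)
    (hρbdd : ∃ C : ℝ, ∀ n ω, ‖ρ n ω‖ ≤ C)
    (T : Ω → (NormedSpace.Dual ℝ (NormedSpace.Dual ℝ E) →L[ℝ] ell1))
    (hT1 : ∀ ω, ‖T ω‖ ≤ 1)
    (hTcpt : ∀ ω, IsCompactOperator (T ω))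
    (hint : ∀ n, Integrable (fun ω => T ω (ρ n ω)) lam)
    (y : ℕ → ell1)
    (hy : ∀ n, y n = ∫ ω, T ω (ρ n ω) ∂lam) :
    IsCompact (@closure (WeakSpace ℝ ell1) _ (Set.range y)) ∧
    IsCompact (closure (Set.range y)) :=
  relatively_compact_image_of_compact_densities_general lam ρ hρbdd T hT1 hTcpt hint y hy
end
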